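/- arXiv:1402.6539 — 3 statements merged into one kernel-verified Lean document; each statement's English description precedes it below -/
import Mathlib

section
/- Let n ∈ ℕ, t ∈ [0, 1/2), and set x = x(t) = (1/2)(1-2t + 1/(1-2t)). Then the first derivative of F_n satisfies F_n'(t) = 2 (x - √(x²-1))^{n-1} (√(x²-1) P_n'(x) - n P_n(x)), where F_n(t) = Σ_{k=0}^{n} (C(n,k) t^k (1-t)^{n-k})² and P_n is the n-th Legendre polynomial. -/
/-!
With `u = 1 - 2t` and `x = (u + u⁻¹)/2` one has `(u/2)(x - 1) = t²` and `(u/2)(x + 1) = (1 - t)²`.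
Leibniz' rule applied to `(x - 1)ⁿ (x + 1)ⁿ` in Rodrigues' formula gives
`Pₙ(x) = 2⁻ⁿ ∑ C(n,k)² (x - 1)ᵏ (x + 1)ⁿ⁻ᵏ`, hence `Fₙ(t) = uⁿ Pₙ(x)`. Differentiating this
identity and using `√(x² - 1) = (u⁻¹ - u)/2`, `x - √(x² - 1) = u` (valid for `0 < u ≤ 1`) gives
the formula.
-/

/-- The sum of the squared Bernstein basis polynomials:
`F_n(t) = ∑_{k=0}^{n} (C(n,k) t^k (1-t)^{n-k})²`. -/
noncomputable def bernsteinSqSum (n : ℕ) (t : ℝ) : ℝ :=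
  ∑ k ∈ Finset.range (n + 1), ((n.choose k : ℝ) * t ^ k * (1 - t) ^ (n - k)) ^ 2

/-- The `n`-th Legendre polynomial, via Rodrigues' formula
`P_n(x) = (1/(2^n n!)) dⁿ/dxⁿ (x²-1)ⁿ`. -/
noncomputable def legendreP (n : ℕ) : ℝ → ℝ := fun x =>
  (1 / (2 ^ n * (n.factorial : ℝ))) * iteratedDeriv n (fun y => (y ^ 2 - 1) ^ n) x

open Polynomial Finset Filter Topology
open scoped Nat

lemma Polynomial.iteratedDeriv_eval {𝕜 : Type*} [NontriviallyNormedField 𝕜] (p : 𝕜[X]) (n : ℕ) :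
    iteratedDeriv n (fun x => p.eval x) = fun x => (derivative^[n] p).eval x := by
  induction n with
  | zero => simp
  | succ n ih =>
    rw [iteratedDeriv_succ, ih, Function.iterate_succ_apply']
    funext x
    exact Polynomial.deriv _

lemma Nat.choose_mul_descFactorial_sub_mul_descFactorial {n k : ℕ} (hk : k ≤ n) :
    n.choose k * n.descFactorial (n - k) * n.descFactorial k = n.choose k ^ 2 * n ! := by
  rw [Nat.descFactorial_eq_factorial_mul_choose, Nat.descFactorial_eq_factorial_mul_choose,
    Nat.choose_symm hk, ← Nat.choose_mul_factorial_mul_factorial hk]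
  ring

lemma Polynomial.iterate_derivative_X_sq_sub_one_pow {R : Type*} [CommRing R] (n : ℕ) :
    derivative^[n] ((X ^ 2 - 1) ^ n : R[X]) =
      n ! * ∑ k ∈ range (n + 1), (n.choose k ^ 2 : R[X]) * (X - 1) ^ k * (X + 1) ^ (n - k) := by
  have hfactor : (X ^ 2 - 1 : R[X]) ^ n = (X - C 1) ^ n * (X + C 1) ^ n := by
    rw [← mul_pow, map_one]; ring
  rw [hfactor, iterate_derivative_mul, mul_sum]
  refine sum_congr rfl fun k hk => ?_
  have hkn : k ≤ n := Nat.lt_succ_iff.mp (mem_range.mp hk)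
  rw [iterate_derivative_X_sub_pow, iterate_derivative_X_add_pow, Nat.sub_sub_self hkn, map_one,
    nsmul_eq_mul, nsmul_eq_mul, nsmul_eq_mul]
  have hcoeff := congrArg (Nat.cast : ℕ → R[X])
    (Nat.choose_mul_descFactorial_sub_mul_descFactorial hkn)
  push_cast at hcoeff
  linear_combination ((X - 1) ^ k * (X + 1) ^ (n - k) : R[X]) * hcoeff

lemma legendreP_eq_sum (n : ℕ) :
    legendreP n = fun x =>
      (∑ k ∈ range (n + 1), (n.choose k : ℝ) ^ 2 * (x - 1) ^ k * (x + 1) ^ (n - k)) / 2 ^ n := by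
  have hpoly : (fun y : ℝ => (y ^ 2 - 1) ^ n) = fun y => ((X ^ 2 - 1 : ℝ[X]) ^ n).eval y := by
    simp
  funext x
  rw [legendreP, hpoly, iteratedDeriv_eval, iterate_derivative_X_sq_sub_one_pow]
  simp only [eval_mul, eval_natCast, eval_finsetSum, eval_pow, eval_sub, eval_add, eval_X,
    eval_one]
  field_simp

lemma differentiable_legendreP (n : ℕ) : Differentiable ℝ (legendreP n) := by
  rw [legendreP_eq_sum]
  fun_prop

lemma sqrt_joukowsky_sq_sub_one {u : ℝ} (hu0 : 0 < u) (hu1 : u ≤ 1) :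
    √(((u + u⁻¹) / 2) ^ 2 - 1) = (u⁻¹ - u) / 2 := by
  have hsq : ((u + u⁻¹) / 2) ^ 2 - 1 = ((u⁻¹ - u) / 2) ^ 2 := by
    field_simp; ring
  have hle : u ≤ u⁻¹ := hu1.trans (one_le_inv₀ hu0 |>.mpr hu1)
  rw [hsq, Real.sqrt_sq (by linarith)]

lemma bernsteinSqSum_eq_pow_mul_legendreP (n : ℕ) {t : ℝ} (ht : 1 - 2 * t ≠ 0) :
    bernsteinSqSum n t =
      (1 - 2 * t) ^ n * legendreP n ((1 - 2 * t + (1 - 2 * t)⁻¹) / 2) := by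
  set u := 1 - 2 * t
  have hsub : u / 2 * ((u + u⁻¹) / 2 - 1) = t ^ 2 := by field_simp; ring
  have hadd : u / 2 * ((u + u⁻¹) / 2 + 1) = (1 - t) ^ 2 := by field_simp; ring
  rw [legendreP_eq_sum, bernsteinSqSum, mul_div_assoc', mul_comm, mul_div_assoc, ← div_pow, sum_mul]
  refine sum_congr rfl fun k hk => ?_
  have hkn : k ≤ n := Nat.lt_succ_iff.mp (mem_range.mp hk)
  have hsplit : (u / 2) ^ n = (u / 2) ^ k * (u / 2) ^ (n - k) := by
    rw [← pow_add, Nat.add_sub_cancel' hkn]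
  calc _ = (n.choose k : ℝ) ^ 2 * (t ^ 2) ^ k * ((1 - t) ^ 2) ^ (n - k) := by
        rw [mul_pow, mul_pow, ← pow_right_comm t, ← pow_right_comm (1 - t)]
    _ = _ := by rw [hsplit, ← hsub, ← hadd, mul_pow, mul_pow]; ring

lemma HasDerivAt.pow_mul_comp_joukowsky {f : ℝ → ℝ} {f' u : ℝ} (n : ℕ) (hu : u ≠ 0)
    (hf : HasDerivAt f f' ((u + u⁻¹) / 2)) :
    HasDerivAt (fun v => v ^ n * f ((v + v⁻¹) / 2))
      (u ^ n / u * (n * f ((u + u⁻¹) / 2) - (u⁻¹ - u) / 2 * f')) u := by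
  have hx : HasDerivAt (fun v => (v + v⁻¹) / 2) ((1 - (u ^ 2)⁻¹) / 2) u := by
    simpa [sub_eq_add_neg] using ((hasDerivAt_id u).add (hasDerivAt_inv hu)).div_const 2
  refine ((hasDerivAt_pow n u).mul (hf.comp u hx)).congr_deriv ?_
  rcases n with _ | n
  · simp only [pow_zero, Nat.cast_zero, zero_mul]
    field_simp
    ring
  · rw [Nat.add_sub_cancel, Function.comp_apply]
    field_simp
    ring

theorem deriv_bernsteinSqSum_eq (n : ℕ) (t x : ℝ) (ht : t ∈ Set.Ico (0 : ℝ) (1 / 2))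
    (hx : x = (1 / 2) * (1 - 2 * t + 1 / (1 - 2 * t))) :
    deriv (bernsteinSqSum n) t =
      2 * (x - Real.sqrt (x ^ 2 - 1)) ^ ((n : ℝ) - 1) *
        (Real.sqrt (x ^ 2 - 1) * deriv (legendreP n) x - (n : ℝ) * legendreP n x) := by
  obtain ⟨ht0, ht1⟩ := ht
  set u := 1 - 2 * t
  have hu0 : 0 < u := by linarith
  have hxu : x = (u + u⁻¹) / 2 := by rw [hx]; ring
  have hsqrt : √(x ^ 2 - 1) = (u⁻¹ - u) / 2 := hxu ▸ sqrt_joukowsky_sq_sub_one hu0 (by linarith)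
  have hF : bernsteinSqSum n =ᶠ[𝓝 t]
      (fun v => v ^ n * legendreP n ((v + v⁻¹) / 2)) ∘ fun s => 1 - 2 * s := by
    filter_upwards [Iio_mem_nhds ht1] with s hs
    exact bernsteinSqSum_eq_pow_mul_legendreP n (by linarith [Set.mem_Iio.mp hs])
  have hu' : HasDerivAt (fun s : ℝ => 1 - 2 * s) (-2) t := by
    simpa using ((hasDerivAt_id t).const_mul (2 : ℝ)).const_sub 1
  have hG := (differentiable_legendreP n x).hasDerivAt
  rw [hxu] at hG
  rw [hF.deriv_eq, ((hG.pow_mul_comp_joukowsky n hu0.ne').comp t hu').deriv, ← hxu, hsqrt,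
    show x - (u⁻¹ - u) / 2 = u by rw [hxu]; ring, Real.rpow_sub hu0, Real.rpow_natCast,
    Real.rpow_one]
  ring
end

section
/- Let n ∈ ℕ, n ≥ 1, λ > -1/2, and x ≥ 1. Then the ratios u_m(x) = (P_m^{(λ)})'(x)/P_m^{(λ)}(x) satisfy the recurrence u_{n+1}(x) = (n+1) · (n + 2λ + x·u_n(x)) / ((n+2λ)x + (x²-1)·u_n(x)). -/
/-- Chebyshev polynomials of the first kind (as real functions):
`T_0 = 1`, `T_1 = x`, `T_{n+2}(x) = 2x T_{n+1}(x) - T_n(x)`. -/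
noncomputable def chebT : ℕ → ℝ → ℝ
  | 0 => fun _ => 1
  | 1 => fun x => x
  | n + 2 => fun x => 2 * x * chebT (n + 1) x - chebT n x

/-- The ultraspherical (Gegenbauer) polynomials for `lam ≠ 0`, via
`P_0 = 1`, `P_1 = 2λx`, `(n+1)P_{n+1}(x) = 2(n+λ)x P_n(x) - (n+2λ-1)P_{n-1}(x)`. -/
noncomputable def gegenRec (lam : ℝ) : ℕ → ℝ → ℝ
  | 0 => fun _ => 1
  | 1 => fun x => 2 * lam * x
  | n + 2 => fun x =>
      (2 * ((n : ℝ) + 1 + lam) * x * gegenRec lam (n + 1) x -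
        ((n : ℝ) + 2 * lam) * gegenRec lam n x) / ((n : ℝ) + 2)

/-- The `n`-th ultraspherical polynomial `P_n^{(λ)}`; for `λ = 0` it is taken to be the
Chebyshev polynomial of the first kind `T_n`. -/
noncomputable def ultra (lam : ℝ) (n : ℕ) : ℝ → ℝ :=
  if lam = 0 then chebT n else gegenRec lam n

/-- The ratio `u_n(x) = (P_n^{(λ)})'(x) / P_n^{(λ)}(x)`. -/
noncomputable def uRatio (lam : ℝ) (n : ℕ) (x : ℝ) : ℝ :=
  deriv (ultra lam n) x / ultra lam n x

/-!
Both families satisfy two differential recurrences of the same shape,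
`c P_{n+1} = a x P_n + (x² - 1) P_n'` and `c P_{n+1}' = b (a P_n + x P_n')`:
for the Gegenbauer recurrence `a = n + 2λ`, `b = c = n + 1`, and for `T_n` (via `U_n`)
`a = c = n`, `b = n + 1`. Dividing both by `P_n` gives the recurrence for `u_n`; `P_n` does
not vanish on `x ≥ 1` since `T_n(x) ≥ 1` there and `λ P_n^{(λ)}`, `λ (P_n^{(λ)})'` stay
positive, resp. nonnegative, along the recurrence as long as `n + 2λ > 0`.
-/

open Polynomial Polynomial.Chebyshev

theorem ratio_recurrence_of_relations {K : Type*} [Field K] {a b c x p dp q dq : K}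
    (hp : p ≠ 0) (hc : c ≠ 0)
    (hq_rel : c * q = a * x * p + (x ^ 2 - 1) * dp) (hdq_rel : c * dq = b * (a * p + x * dp)) :
    dq / q = b * (a + x * (dp / p)) / (a * x + (x ^ 2 - 1) * (dp / p)) := by
  have hnum : b * (a + x * (dp / p)) = c * dq / p := by
    field_simp
    linear_combination -hdq_rel
  have hden : a * x + (x ^ 2 - 1) * (dp / p) = c * q / p := by
    field_simp
    linear_combination -hq_rel
  rw [hnum, hden, div_div_div_cancel_right₀ hp, mul_div_mul_left _ _ hc]

namespace Polynomial.Chebyshev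

variable (R : Type*) [CommRing R]

theorem mul_T_add_one_eq (n : ℤ) :
    (n : R[X]) * T R (n + 1) = (n : R[X]) * X * T R n + (X ^ 2 - 1) * derivative (T R n) := by
  have h := one_sub_X_sq_mul_derivative_T_eq_poly_in_T (R := R) (n - 1)
  simp only [sub_add_cancel] at h
  linear_combination (norm := (push_cast; ring_nf)) h + (n : R[X]) * T_add_one R n

theorem mul_derivative_T_add_one_eq (n : ℤ) :
    (n : R[X]) * derivative (T R (n + 1)) =
      ((n : R[X]) + 1) * ((n : R[X]) * T R n + X * derivative (T R n)) := by
  have h := U_eq_X_mul_U_add_T R (n - 1)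
  simp only [sub_add_cancel] at h
  rw [T_derivative_eq_U, T_derivative_eq_U, add_sub_cancel_right]
  linear_combination (norm := (push_cast; ring_nf)) ((n : R[X]) * (n + 1)) * h

end Polynomial.Chebyshev

theorem chebT_eq_eval (n : ℕ) (x : ℝ) : chebT n x = (T ℝ n).eval x := by
  induction n using Nat.twoStepInduction with
  | zero => simp [chebT]
  | one => simp [chebT]
  | more n ih₀ ih₁ =>
    simp only [chebT, ih₀, ih₁]
    push_cast
    simp [T_add_two]

theorem deriv_chebT (n : ℕ) (x : ℝ) : deriv (chebT n) x = (derivative (T ℝ n)).eval x := by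
  rw [funext (chebT_eq_eval n), Polynomial.deriv]

noncomputable def gegenRecDeriv (lam : ℝ) : ℕ → ℝ → ℝ
  | 0 => fun _ => 0
  | 1 => fun _ => 2 * lam
  | n + 2 => fun x =>
      (2 * ((n : ℝ) + 1 + lam) * (gegenRec lam (n + 1) x + x * gegenRecDeriv lam (n + 1) x) -
        ((n : ℝ) + 2 * lam) * gegenRecDeriv lam n x) / ((n : ℝ) + 2)

section Gegenbauer

variable (lam : ℝ)

theorem hasDerivAt_gegenRec (n : ℕ) (x : ℝ) :
    HasDerivAt (gegenRec lam n) (gegenRecDeriv lam n x) x := by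
  induction n using Nat.twoStepInduction generalizing x with
  | zero => simpa [gegenRec, gegenRecDeriv] using hasDerivAt_const x (1 : ℝ)
  | one => simpa [gegenRec, gegenRecDeriv] using (hasDerivAt_id x).const_mul (2 * lam)
  | more n ih₀ ih₁ =>
    have h := (((hasDerivAt_id x).mul (ih₁ x)).const_mul (2 * ((n : ℝ) + 1 + lam))).sub
      ((ih₀ x).const_mul ((n : ℝ) + 2 * lam))
    simpa [gegenRec, gegenRecDeriv, mul_assoc] using h.div_const ((n : ℝ) + 2)

theorem add_two_mul_gegenRec (n : ℕ) (x : ℝ) :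
    ((n : ℝ) + 2) * gegenRec lam (n + 2) x =
      2 * ((n : ℝ) + 1 + lam) * x * gegenRec lam (n + 1) x -
        ((n : ℝ) + 2 * lam) * gegenRec lam n x :=
  mul_div_cancel₀ _ (by positivity)

theorem add_two_mul_gegenRecDeriv (n : ℕ) (x : ℝ) :
    ((n : ℝ) + 2) * gegenRecDeriv lam (n + 2) x =
      2 * ((n : ℝ) + 1 + lam) * (gegenRec lam (n + 1) x + x * gegenRecDeriv lam (n + 1) x) -
        ((n : ℝ) + 2 * lam) * gegenRecDeriv lam n x :=
  mul_div_cancel₀ _ (by positivity)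

theorem gegenRecDeriv_succ_and_x_mul_gegenRecDeriv_succ (n : ℕ) (x : ℝ) :
    gegenRecDeriv lam (n + 1) x = x * gegenRecDeriv lam n x + (n + 2 * lam) * gegenRec lam n x ∧
      x * gegenRecDeriv lam (n + 1) x - gegenRecDeriv lam n x =
        (n + 1) * gegenRec lam (n + 1) x := by
  induction n with
  | zero => simp [gegenRec, gegenRecDeriv, mul_comm]
  | succ n ih =>
    obtain ⟨ih_deriv, ih_sub⟩ := ih
    have h_deriv : gegenRecDeriv lam (n + 2) x =
        x * gegenRecDeriv lam (n + 1) x + (n + 1 + 2 * lam) * gegenRec lam (n + 1) x := by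
      apply mul_left_cancel₀ (by positivity : (n : ℝ) + 2 ≠ 0)
      linear_combination add_two_mul_gegenRecDeriv lam n x + (n + 2 * lam) * ih_sub
    show gegenRecDeriv lam (n + 2) x = _ ∧
      x * gegenRecDeriv lam (n + 2) x - _ = _ * gegenRec lam (n + 2) x
    push_cast
    constructor
    · linear_combination h_deriv
    · linear_combination x * h_deriv + x * ih_sub - ih_deriv - add_two_mul_gegenRec lam n x

theorem gegenRecDeriv_succ (n : ℕ) (x : ℝ) :
    gegenRecDeriv lam (n + 1) x = x * gegenRecDeriv lam n x + (n + 2 * lam) * gegenRec lam n x :=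
  (gegenRecDeriv_succ_and_x_mul_gegenRecDeriv_succ lam n x).1

theorem add_one_mul_gegenRec_succ (n : ℕ) (x : ℝ) :
    ((n : ℝ) + 1) * gegenRec lam (n + 1) x =
      (n + 2 * lam) * x * gegenRec lam n x + (x ^ 2 - 1) * gegenRecDeriv lam n x := by
  obtain ⟨h_deriv, h_sub⟩ := gegenRecDeriv_succ_and_x_mul_gegenRecDeriv_succ lam n x
  linear_combination -h_sub + x * h_deriv

theorem mul_gegenRec_pos_and_mul_gegenRecDeriv_nonneg (hlam : -(1 / 2) < lam) (hlam_ne : lam ≠ 0)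
    {x : ℝ} (hx : 1 ≤ x) {n : ℕ} (hn : 1 ≤ n) :
    0 < lam * gegenRec lam n x ∧ 0 ≤ lam * gegenRecDeriv lam n x := by
  induction n, hn using Nat.le_induction with
  | base =>
    have hsq : 0 < lam * lam := mul_self_pos.mpr hlam_ne
    simp only [gegenRec, gegenRecDeriv]
    constructor <;> nlinarith
  | succ n hn ih =>
    obtain ⟨hP, hD⟩ := ih
    have hn2 : 0 < (n : ℝ) + 2 * lam := by
      have hn_one : (1 : ℝ) ≤ n := by exact_mod_cast hn
      linarith
    have hx2 : 0 ≤ x ^ 2 - 1 := by nlinarith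
    have hP_succ : 0 < ((n : ℝ) + 1) * (lam * gegenRec lam (n + 1) x) := by
      have h_rec := add_one_mul_gegenRec_succ lam n x
      have h_first : 0 < (n + 2 * lam) * x * (lam * gegenRec lam n x) := by positivity
      nlinarith [mul_nonneg hx2 hD]
    refine ⟨pos_of_mul_pos_right hP_succ (by positivity), ?_⟩
    rw [gegenRecDeriv_succ]
    nlinarith [mul_nonneg (by linarith : (0 : ℝ) ≤ x) hD]

end Gegenbauer

theorem ultra_ratio_recurrence (n : ℕ) (hn : 1 ≤ n) (lam : ℝ) (hlam : -(1 / 2) < lam)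
    (x : ℝ) (hx : 1 ≤ x) :
    uRatio lam (n + 1) x =
      ((n : ℝ) + 1) * ((n : ℝ) + 2 * lam + x * uRatio lam n x) /
        (((n : ℝ) + 2 * lam) * x + (x ^ 2 - 1) * uRatio lam n x) := by
  unfold uRatio ultra
  split_ifs with hlam0
  · subst hlam0
    simp only [deriv_chebT, chebT_eq_eval, mul_zero, add_zero]
    have hA := congrArg (eval x) (mul_T_add_one_eq ℝ n)
    have hB := congrArg (eval x) (mul_derivative_T_add_one_eq ℝ n)
    simp only [Int.cast_natCast, eval_mul, eval_natCast, eval_add, eval_X, eval_sub, eval_pow,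
      eval_one] at hA hB
    push_cast
    refine ratio_recurrence_of_relations (one_pos.trans_le (one_le_eval_T_real n hx)).ne'
      (by positivity) hA hB
  · simp only [(hasDerivAt_gegenRec lam _ x).deriv]
    have hP := (mul_gegenRec_pos_and_mul_gegenRecDeriv_nonneg lam hlam hlam0 hx hn).1
    refine ratio_recurrence_of_relations (c := (n : ℝ) + 1) (right_ne_zero_of_mul hP.ne')
      (by positivity) (add_one_mul_gegenRec_succ lam n x) ?_
    rw [gegenRecDeriv_succ]
    ring
end

section
/- Let n ∈ ℕ, n ≥ 1, and fix x ≥ 1. Then the function λ ↦ u_n(x; λ) = (P_n^{(λ)})'(x)/P_n^{(λ)}(x) is monotone decreasing on (-1/2, ∞): if -1/2 < λ₁ ≤ λ₂, then u_n(x; λ₂) ≤ u_n(x; λ₁). -/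
/-!
Up to a nonzero factor, `P_n^{(λ)}(x)` is `₂F₁(-n, n + 2λ; λ + 1/2; (1 - x)/2)`, a polynomial
`∑ c_k(λ) (x - 1)^k` with nonnegative coefficients and `c_0 = 1`. The term ratio
`c_{k+1}(λ) / c_k(λ) = (n - k)(n + 2λ + k) / (2(k + 1)(λ + 1/2 + k))` decreases in `λ`, so
`c_k(λ₂) / c_k(λ₁)` is nonincreasing in `k`. For two polynomials `p = ∑ a_k y^k`, `q = ∑ b_k y^k`
with `b_k / a_k` nonincreasing, symmetrizing the double sum for `q' p - p' q` shows it is `≤ 0`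
on `y ≥ 0`; with `y = x - 1` this is the claim.
-/

open Finset Polynomial

lemma descPochhammer_eval_succ_left {R : Type*} [CommRing R] (k : ℕ) (a : R) :
    (descPochhammer R (k + 1)).eval a = a * (descPochhammer R k).eval (a - 1) := by
  simp [descPochhammer_succ_left, eval_comp]

lemma ascPochhammer_eval_succ_left {S : Type*} [CommSemiring S] (k : ℕ) (a : S) :
    (ascPochhammer S (k + 1)).eval a = a * (ascPochhammer S k).eval (a + 1) := by
  simp [ascPochhammer_succ_left, eval_comp]

lemma ascPochhammer_eval_ne_zero {a : ℝ} (ha : -1 < a) (ha0 : a ≠ 0) (n : ℕ) :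
    (ascPochhammer ℝ n).eval a ≠ 0 := by
  rcases n with _ | n
  · simp
  rw [ascPochhammer_eval_succ_left]
  exact mul_ne_zero ha0 (ascPochhammer_pos n _ (by linarith)).ne'

lemma natCast_mul_pow_pred_mul_pow_le {y : ℝ} (hy : 0 ≤ y) {j k : ℕ} (hjk : j ≤ k) :
    j * y ^ (j - 1) * y ^ k ≤ k * y ^ (k - 1) * y ^ j := by
  rcases j with _ | j
  · simp only [Nat.cast_zero, zero_mul]
    positivity
  obtain ⟨k, rfl⟩ : ∃ k', k = k' + 1 := ⟨k - 1, by omega⟩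
  simp only [Nat.add_sub_cancel]
  calc ((j + 1 : ℕ) : ℝ) * y ^ j * y ^ (k + 1) = (j + 1 : ℕ) * (y ^ k * y ^ (j + 1)) := by ring
    _ ≤ (k + 1 : ℕ) * (y ^ k * y ^ (j + 1)) := by gcongr
    _ = _ := by ring

theorem sum_deriv_mul_sum_le_of_cross_le {N : ℕ} {a b : ℕ → ℝ} {y : ℝ} (hy : 0 ≤ y)
    (hab : ∀ j k, j ≤ k → k < N → b k * a j ≤ a k * b j) :
    (∑ k ∈ range N, b k * (k * y ^ (k - 1))) * ∑ j ∈ range N, a j * y ^ j ≤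
      (∑ k ∈ range N, a k * (k * y ^ (k - 1))) * ∑ j ∈ range N, b j * y ^ j := by
  set D : ℕ → ℕ → ℝ := fun k j => (b k * a j - a k * b j) * (k * y ^ (k - 1) * y ^ j)
  have hdiff : (∑ k ∈ range N, b k * (k * y ^ (k - 1))) * ∑ j ∈ range N, a j * y ^ j -
      (∑ k ∈ range N, a k * (k * y ^ (k - 1))) * ∑ j ∈ range N, b j * y ^ j =
        ∑ k ∈ range N, ∑ j ∈ range N, D k j := by
    simp only [sum_mul_sum, ← sum_sub_distrib, D]
    exact sum_congr rfl fun k _ => sum_congr rfl fun j _ => by ring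
  have hpair : ∀ k ∈ range N, ∀ j ∈ range N, D k j + D j k ≤ 0 := by
    intro k hk j hj
    have hsplit : D k j + D j k =
        (b k * a j - a k * b j) * (k * y ^ (k - 1) * y ^ j - j * y ^ (j - 1) * y ^ k) := by
      simp only [D]
      ring
    rw [hsplit]
    rcases le_total j k with h | h
    · exact mul_nonpos_of_nonpos_of_nonneg (by linarith [hab j k h (mem_range.1 hk)])
        (sub_nonneg.2 (natCast_mul_pow_pred_mul_pow_le hy h))
    · exact mul_nonpos_of_nonneg_of_nonpos (by linarith [hab k j h (mem_range.1 hj)])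
        (sub_nonpos.2 (natCast_mul_pow_pred_mul_pow_le hy h))
  have hsymm : ∑ k ∈ range N, ∑ j ∈ range N, (D k j + D j k) =
      2 * ∑ k ∈ range N, ∑ j ∈ range N, D k j := by
    rw [two_mul]
    simp only [sum_add_distrib]
    congr 1
    exact sum_comm
  have := sum_nonpos fun k hk => sum_nonpos (hpair k hk)
  linarith

/-- `∑ₖ gegenCoeff lam n k * (x - 1) ^ k` is `₂F₁(-n, n + 2λ; λ + 1/2; (1 - x)/2)`, i.e.
`P_n^{(λ)}` normalized to take the value `1` at `x = 1`. -/
noncomputable def gegenCoeff (lam : ℝ) (n k : ℕ) : ℝ :=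
  (descPochhammer ℝ k).eval (n : ℝ) * (ascPochhammer ℝ k).eval (n + 2 * lam) /
    (k.factorial * 2 ^ k * (ascPochhammer ℝ k).eval (lam + 1 / 2))

noncomputable def gegenNorm (lam : ℝ) (n : ℕ) (x : ℝ) : ℝ :=
  ∑ k ∈ range (n + 1), gegenCoeff lam n k * (x - 1) ^ k

noncomputable def gegenNormDeriv (lam : ℝ) (n : ℕ) (x : ℝ) : ℝ :=
  ∑ k ∈ range (n + 1), gegenCoeff lam n k * (k * (x - 1) ^ (k - 1))

noncomputable def gegenCoeffRatio (lam : ℝ) (n k : ℕ) : ℝ :=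
  (n - k) * (n + 2 * lam + k) / (2 * (k + 1) * (lam + 1 / 2 + k))

@[simp]
lemma gegenCoeff_zero (lam : ℝ) (n : ℕ) : gegenCoeff lam n 0 = 1 := by
  simp [gegenCoeff]

lemma gegenCoeff_succ (lam : ℝ) (n k : ℕ) :
    gegenCoeff lam n (k + 1) = gegenCoeff lam n k * gegenCoeffRatio lam n k := by
  simp only [gegenCoeff, gegenCoeffRatio, descPochhammer_succ_eval, ascPochhammer_succ_eval,
    Nat.factorial_succ, pow_succ, Nat.cast_mul, Nat.cast_succ]
  rw [div_mul_div_comm]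
  congr 1 <;> ring

lemma gegenCoeff_eq_zero_of_lt (lam : ℝ) {n k : ℕ} (h : n < k) : gegenCoeff lam n k = 0 := by
  simp [gegenCoeff, descPochhammer_eval_eq_descFactorial, Nat.descFactorial_eq_zero_iff_lt.2 h]

lemma gegenCoeffRatio_nonneg {lam : ℝ} (hlam : -(1 / 2) < lam) {n k : ℕ} (hk : k < n) :
    0 ≤ gegenCoeffRatio lam n k := by
  have hkn : (k : ℝ) + 1 ≤ n := by exact_mod_cast hk
  have hk0 : (0 : ℝ) ≤ k := k.cast_nonneg
  apply div_nonneg <;> apply mul_nonneg <;> linarith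

lemma gegenCoeffRatio_antitone {lam₁ lam₂ : ℝ} (h1 : -(1 / 2) < lam₁) (h12 : lam₁ ≤ lam₂)
    {n k : ℕ} (hk : k < n) : gegenCoeffRatio lam₂ n k ≤ gegenCoeffRatio lam₁ n k := by
  have hkn : (k : ℝ) + 1 ≤ n := by exact_mod_cast hk
  have hk0 : (0 : ℝ) ≤ k := k.cast_nonneg
  rw [gegenCoeffRatio, gegenCoeffRatio, div_le_div_iff₀ (by nlinarith) (by nlinarith)]
  have hnk : (0 : ℝ) ≤ (n - k) * (2 * (k + 1)) := mul_nonneg (by linarith) (by linarith)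
  nlinarith [mul_nonneg hnk (mul_nonneg (by linarith : (0 : ℝ) ≤ n - k - 1) (sub_nonneg.2 h12))]

lemma gegenCoeff_nonneg {lam : ℝ} (hlam : -(1 / 2) < lam) {n k : ℕ} (hk : k ≤ n) :
    0 ≤ gegenCoeff lam n k := by
  induction k with
  | zero => simp
  | succ k ih =>
    rw [gegenCoeff_succ]
    exact mul_nonneg (ih (by omega)) (gegenCoeffRatio_nonneg hlam (by omega))

lemma gegenCoeff_cross_le {lam₁ lam₂ : ℝ} (h1 : -(1 / 2) < lam₁) (h12 : lam₁ ≤ lam₂)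
    {n j k : ℕ} (hjk : j ≤ k) (hkn : k ≤ n) :
    gegenCoeff lam₂ n k * gegenCoeff lam₁ n j ≤ gegenCoeff lam₁ n k * gegenCoeff lam₂ n j := by
  induction k, hjk using Nat.le_induction with
  | base => rw [mul_comm]
  | succ k hjk ih =>
    have h2 : -(1 / 2) < lam₂ := h1.trans_le h12
    rw [gegenCoeff_succ, gegenCoeff_succ lam₁]
    calc _ = gegenCoeff lam₂ n k * gegenCoeff lam₁ n j * gegenCoeffRatio lam₂ n k := by ring
      _ ≤ gegenCoeff lam₁ n k * gegenCoeff lam₂ n j * gegenCoeffRatio lam₂ n k :=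
        mul_le_mul_of_nonneg_right (ih (by omega)) (gegenCoeffRatio_nonneg h2 (by omega))
      _ ≤ gegenCoeff lam₁ n k * gegenCoeff lam₂ n j * gegenCoeffRatio lam₁ n k :=
        mul_le_mul_of_nonneg_left (gegenCoeffRatio_antitone h1 h12 (by omega))
          (mul_nonneg (gegenCoeff_nonneg h1 (by omega)) (gegenCoeff_nonneg h2 (by omega)))
      _ = _ := by ring

lemma gegenCoeff_recurrence {lam : ℝ} (hlam : -(1 / 2) < lam) (n k : ℕ) :
    (n + 1 + 2 * lam) * gegenCoeff lam (n + 2) (k + 1) =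
      2 * (n + 1 + lam) * (gegenCoeff lam (n + 1) (k + 1) + gegenCoeff lam (n + 1) k) -
        (n + 1) * gegenCoeff lam n (k + 1) := by
  simp only [gegenCoeff]
  push_cast
  -- Every Pochhammer value is expressed through `A`, `B`, `Q`; what is left is an identity
  -- between rational functions of `n`, `k` and `λ`.
  set A := (descPochhammer ℝ k).eval ((n : ℝ) + 1)
  set B := (ascPochhammer ℝ k).eval ((n : ℝ) + 1 + 2 * lam)
  set Q := (k.factorial : ℝ) * 2 ^ k * (ascPochhammer ℝ k).eval (lam + 1 / 2)
  have hQ : 0 < Q := by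
    have := ascPochhammer_pos k (lam + 1 / 2) (by linarith)
    positivity
  have hk : (0 : ℝ) ≤ k := k.cast_nonneg
  have hd2 : (descPochhammer ℝ (k + 1)).eval ((n : ℝ) + 2) = (n + 2) * A := by
    rw [descPochhammer_eval_succ_left, show (n : ℝ) + 2 - 1 = n + 1 by ring]
  have hd1 : (descPochhammer ℝ (k + 1)).eval ((n : ℝ) + 1) = A * (n + 1 - k) :=
    descPochhammer_succ_eval k _
  have hd0 : (descPochhammer ℝ (k + 1)).eval (n : ℝ) = A * (n + 1 - k) * (n - k) / (n + 1) := by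
    rw [descPochhammer_succ_eval, eq_div_iff (by positivity), ← hd1,
      descPochhammer_eval_succ_left, add_sub_cancel_right]
    ring
  have ha1 : (ascPochhammer ℝ (k + 1)).eval ((n : ℝ) + 1 + 2 * lam) =
      B * (n + 1 + 2 * lam + k) :=
    ascPochhammer_succ_eval k _
  have ha0 : (ascPochhammer ℝ (k + 1)).eval ((n : ℝ) + 2 * lam) = (n + 2 * lam) * B := by
    rw [ascPochhammer_eval_succ_left, show (n : ℝ) + 2 * lam + 1 = n + 1 + 2 * lam by ring]
  have ha2 : (ascPochhammer ℝ (k + 1)).eval ((n : ℝ) + 2 + 2 * lam) =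
      B * (n + 1 + 2 * lam + k) * (n + 2 + 2 * lam + k) / (n + 1 + 2 * lam) := by
    rw [ascPochhammer_succ_eval, eq_div_iff (by linarith), ← ha1, ascPochhammer_eval_succ_left,
      show (n : ℝ) + 1 + 2 * lam + 1 = n + 2 + 2 * lam by ring]
    ring
  have hQ1 : ((k + 1).factorial : ℝ) * 2 ^ (k + 1) * (ascPochhammer ℝ (k + 1)).eval (lam + 1 / 2) =
      Q * (2 * (k + 1) * (lam + 1 / 2 + k)) := by
    rw [Nat.factorial_succ, ascPochhammer_succ_eval, pow_succ]
    push_cast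
    ring
  rw [hd2, hd1, hd0, ha2, ha1, ha0, hQ1]
  have : (n : ℝ) + 1 + 2 * lam ≠ 0 := by linarith
  have : 2 * lam + 1 + 2 * k ≠ 0 := by linarith
  field_simp
  ring

lemma gegenNorm_eq_sum_succ (lam : ℝ) {n N : ℕ} (hN : n ≤ N) (x : ℝ) :
    gegenNorm lam n x = ∑ k ∈ range N, gegenCoeff lam n (k + 1) * (x - 1) ^ (k + 1) + 1 := by
  rw [gegenNorm, sum_range_succ', gegenCoeff_zero, pow_zero, mul_one]
  congr 1
  refine sum_subset (range_subset_range.2 hN) fun k _ hk => ?_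
  rw [gegenCoeff_eq_zero_of_lt lam (by simpa using hk), zero_mul]

lemma gegenNorm_recurrence {lam : ℝ} (hlam : -(1 / 2) < lam) (n : ℕ) (x : ℝ) :
    (n + 1 + 2 * lam) * gegenNorm lam (n + 2) x =
      2 * (n + 1 + lam) * x * gegenNorm lam (n + 1) x - (n + 1) * gegenNorm lam n x := by
  have hshift : (x - 1) * gegenNorm lam (n + 1) x =
      ∑ k ∈ range (n + 2), gegenCoeff lam (n + 1) k * (x - 1) ^ (k + 1) := by
    rw [gegenNorm, mul_sum]
    exact sum_congr rfl fun k _ => by ring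
  have hx : x * gegenNorm lam (n + 1) x = ∑ k ∈ range (n + 2),
      (gegenCoeff lam (n + 1) (k + 1) + gegenCoeff lam (n + 1) k) * (x - 1) ^ (k + 1) + 1 := by
    rw [show x * gegenNorm lam (n + 1) x =
        gegenNorm lam (n + 1) x + (x - 1) * gegenNorm lam (n + 1) x by ring, hshift,
      gegenNorm_eq_sum_succ lam (by omega : n + 1 ≤ n + 2), add_right_comm, ← sum_add_distrib]
    simp only [add_mul]
  have hcoeff : (n + 1 + 2 * lam) *
      ∑ k ∈ range (n + 2), gegenCoeff lam (n + 2) (k + 1) * (x - 1) ^ (k + 1) =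
        2 * (n + 1 + lam) * ∑ k ∈ range (n + 2),
          (gegenCoeff lam (n + 1) (k + 1) + gegenCoeff lam (n + 1) k) * (x - 1) ^ (k + 1) -
        (n + 1) * ∑ k ∈ range (n + 2), gegenCoeff lam n (k + 1) * (x - 1) ^ (k + 1) := by
    simp only [mul_sum, ← sum_sub_distrib]
    refine sum_congr rfl fun k _ => ?_
    linear_combination (x - 1) ^ (k + 1) * gegenCoeff_recurrence hlam n k
  rw [mul_assoc _ x, hx, gegenNorm_eq_sum_succ lam le_rfl,
    gegenNorm_eq_sum_succ lam (by omega : n ≤ n + 2)]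
  linear_combination hcoeff

lemma gegenNorm_zero (lam x : ℝ) : gegenNorm lam 0 x = 1 := by
  simp [gegenNorm]

lemma gegenNorm_one {lam : ℝ} (hlam : -(1 / 2) < lam) (x : ℝ) : gegenNorm lam 1 x = x := by
  have : 2 * lam + 1 ≠ 0 := by linarith
  simp [gegenNorm, sum_range_succ, gegenCoeff_succ, gegenCoeffRatio]
  field_simp
  ring

theorem chebT_eq_gegenNorm : ∀ (n : ℕ) (x : ℝ), chebT n x = gegenNorm 0 n x
  | 0, x => by rw [gegenNorm_zero, chebT]
  | 1, x => by rw [gegenNorm_one (by norm_num), chebT]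
  | n + 2, x => by
    have h := gegenNorm_recurrence (lam := 0) (by norm_num) n x
    have hn : (n : ℝ) + 1 ≠ 0 := by positivity
    simp only [chebT]
    rw [chebT_eq_gegenNorm (n + 1) x, chebT_eq_gegenNorm n x]
    apply mul_left_cancel₀ hn
    linear_combination -h

theorem gegenRec_eq_mul_gegenNorm {lam : ℝ} (hlam : -(1 / 2) < lam) :
    ∀ (n : ℕ) (x : ℝ), gegenRec lam n x =
      (ascPochhammer ℝ n).eval (2 * lam) / n.factorial * gegenNorm lam n x
  | 0, x => by simp [gegenRec, gegenNorm_zero]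
  | 1, x => by simp [gegenRec, gegenNorm_one hlam]
  | n + 2, x => by
    have h := gegenNorm_recurrence hlam n x
    simp only [gegenRec]
    rw [gegenRec_eq_mul_gegenNorm hlam (n + 1) x, gegenRec_eq_mul_gegenNorm hlam n x]
    simp only [ascPochhammer_succ_eval, Nat.factorial_succ]
    push_cast
    field_simp
    linear_combination -(ascPochhammer ℝ n).eval (2 * lam) * (2 * lam + n) * (n + 2) * h

lemma ultra_eq_const_mul_gegenNorm {lam : ℝ} (hlam : -(1 / 2) < lam) (n : ℕ) :
    ∃ K ≠ 0, ultra lam n = fun x => K * gegenNorm lam n x := by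
  by_cases hlam0 : lam = 0
  · subst hlam0
    exact ⟨1, one_ne_zero, funext fun x => by simp [ultra, chebT_eq_gegenNorm]⟩
  · refine ⟨(ascPochhammer ℝ n).eval (2 * lam) / n.factorial,
      div_ne_zero (ascPochhammer_eval_ne_zero (by linarith) (by simpa using hlam0) n)
        (by positivity),
      funext fun x => ?_⟩
    simp [ultra, hlam0, gegenRec_eq_mul_gegenNorm hlam]

lemma hasDerivAt_gegenNorm (lam : ℝ) (n : ℕ) (x : ℝ) :
    HasDerivAt (gegenNorm lam n) (gegenNormDeriv lam n x) x := by
  have h : ∀ k ∈ range (n + 1), HasDerivAt (fun y => gegenCoeff lam n k * (y - 1) ^ k)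
      (gegenCoeff lam n k * (k * (x - 1) ^ (k - 1))) x := fun k _ => by
    simpa using (((hasDerivAt_id x).sub_const 1).pow k).const_mul (gegenCoeff lam n k)
  exact HasDerivAt.fun_sum h

lemma gegenNorm_pos {lam : ℝ} (hlam : -(1 / 2) < lam) (n : ℕ) {x : ℝ} (hx : 1 ≤ x) :
    0 < gegenNorm lam n x := by
  rw [gegenNorm_eq_sum_succ lam le_rfl]
  refine add_pos_of_nonneg_of_pos (sum_nonneg fun k hk => ?_) one_pos
  exact mul_nonneg (gegenCoeff_nonneg hlam (by simpa using hk)) (pow_nonneg (by linarith) _)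

lemma uRatio_eq {lam : ℝ} (hlam : -(1 / 2) < lam) (n : ℕ) (x : ℝ) :
    uRatio lam n x = gegenNormDeriv lam n x / gegenNorm lam n x := by
  obtain ⟨K, hK, h⟩ := ultra_eq_const_mul_gegenNorm hlam n
  rw [uRatio, h, ((hasDerivAt_gegenNorm lam n x).const_mul K).deriv, mul_div_mul_left _ _ hK]

theorem ultra_ratio_antitone_in_lambda_general (n : ℕ) (x : ℝ) (hx : 1 ≤ x)
    (lam₁ lam₂ : ℝ) (h1 : -(1 / 2) < lam₁) (h12 : lam₁ ≤ lam₂) :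
    uRatio lam₂ n x ≤ uRatio lam₁ n x := by
  have h2 : -(1 / 2) < lam₂ := h1.trans_le h12
  rw [uRatio_eq h1, uRatio_eq h2,
    div_le_div_iff₀ (gegenNorm_pos h2 n hx) (gegenNorm_pos h1 n hx)]
  exact sum_deriv_mul_sum_le_of_cross_le (sub_nonneg.2 hx) fun j k hjk hk =>
    gegenCoeff_cross_le h1 h12 hjk (by omega)

theorem ultra_ratio_antitone_in_lambda (n : ℕ) (hn : 1 ≤ n) (x : ℝ) (hx : 1 ≤ x)
    (lam₁ lam₂ : ℝ) (h1 : -(1 / 2) < lam₁) (h12 : lam₁ ≤ lam₂) :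
    uRatio lam₂ n x ≤ uRatio lam₁ n x :=
  ultra_ratio_antitone_in_lambda_general n x hx lam₁ lam₂ h1 h12
end
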